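/- Let G be a finite simple graph with a total valid coloring, and let a, b, c, d be distinct vertices forming an induced paw: ab, ac, bc, ad are edges of G, while bd and cd are not edges. Then the two vertices of odd degree in the paw, namely a and d, receive different colors. -/

import Mathlib

variable {V : Type*}

/-- A total coloring (`true` = black, `false` = white) of the vertices of `G` is valid
if no two white vertices are adjacent and every black vertex has exactly one
black neighbor. -/
def ValidColoring (G : SimpleGraph V) (C : V → Bool) : Prop :=
  (∀ u v, G.Adj u v → ¬(C u = false ∧ C v = false)) ∧
  (∀ v, C v = true → ∃! u, G.Adj v u ∧ C u = true)

namespace ValidColoring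

variable {G : SimpleGraph V} {C : V → Bool}

theorem eq_false_of_adj_of_ne (hC : ValidColoring G C) {v w x : V} (hv : C v = true)
    (hvw : G.Adj v w) (hw : C w = true) (hvx : G.Adj v x) (hxw : x ≠ w) : C x = false := by
  obtain ⟨u, -, huniq⟩ := hC.2 v hv
  rw [← Bool.not_eq_true]
  intro hx
  exact hxw ((huniq x ⟨hvx, hx⟩).trans (huniq w ⟨hvw, hw⟩).symm)

end ValidColoring

theorem stmt_7_general (G : SimpleGraph V) (C : V → Bool)
    (hC : ValidColoring G C) (a b c d : V)
    (hdist : a ≠ b ∧ a ≠ c ∧ a ≠ d ∧ b ≠ c ∧ b ≠ d ∧ c ≠ d)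
    (hab : G.Adj a b) (hac : G.Adj a c) (hbc : G.Adj b c) (had : G.Adj a d) :
    C a ≠ C d := by
  obtain ⟨-, -, -, -, hbd, hcd⟩ := hdist
  intro hcol
  cases ha : C a
  · exact hC.1 a d had ⟨ha, hcol ▸ ha⟩
  · -- `d` is the black partner of `a`, so the other neighbors `b`, `c` of `a` are both white.
    have hd : C d = true := hcol ▸ ha
    have hb := hC.eq_false_of_adj_of_ne ha had hd hab hbd
    have hc := hC.eq_false_of_adj_of_ne ha had hd hac hcd
    exact hC.1 b c hbc ⟨hb, hc⟩

/-- In an induced paw, any total valid coloring gives the two odd-degree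
vertices different colors. -/
theorem stmt_7 [Fintype V] (G : SimpleGraph V) (C : V → Bool)
    (hC : ValidColoring G C) (a b c d : V)
    (hdist : a ≠ b ∧ a ≠ c ∧ a ≠ d ∧ b ≠ c ∧ b ≠ d ∧ c ≠ d)
    (hab : G.Adj a b) (hac : G.Adj a c) (hbc : G.Adj b c) (had : G.Adj a d)
    (hbd : ¬ G.Adj b d) (hcd : ¬ G.Adj c d) :
    C a ≠ C d :=
  stmt_7_general G C hC a b c d hdist hab hac hbc had
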